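/- arXiv:2311.06069 — 5 statements merged into one kernel-verified Lean document; each statement's English description precedes it below -/
import Mathlib

section
/- The cell-centered Hartley matrix H(n) is orthogonal up to the factor n: H(n)·H(n)ᵀ = H(n)ᵀ·H(n) = n·I_n. -/
/-!
Writing `cas x = cos x + sin x`, the identity `cas x * cas y = cos (x - y) + sin (x + y)` turns
each entry of `H * Hᵀ` into a sum of real and imaginary parts of geometric sums over the `n`-th
roots of unity, which vanish off the diagonal. The identity `Hᵀ * H = n • 1` follows because a
one-sided inverse of a square matrix is two-sided.
-/

open Matrix Real

/-- The cell-centered Hartley matrix `H(n)` with entries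
`H(n)_{j,k} = cos(2(j+1/2)kπ/n) + sin(2(j+1/2)kπ/n)`. -/
noncomputable def hartley (n : ℕ) : Matrix (Fin n) (Fin n) ℝ :=
  fun j k =>
    Real.cos (2 * ((j.val : ℝ) + 1/2) * (k.val : ℝ) * Real.pi / n) +
    Real.sin (2 * ((j.val : ℝ) + 1/2) * (k.val : ℝ) * Real.pi / n)

open Finset

theorem geom_sum_range_of_pow_eq_one {R : Type*} [CommRing R] [IsDomain R] [DecidableEq R]
    {x : R} {n : ℕ} (hx : x ^ n = 1) :
    ∑ k ∈ range n, x ^ k = if x = 1 then (n : R) else 0 := by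
  split_ifs with h
  · simp [h]
  · refine (mul_eq_zero.1 ?_).resolve_left (sub_ne_zero.2 (Ne.symm h))
    rw [mul_neg_geom_sum, hx, sub_self]

open Complex in
theorem sum_range_exp_two_pi_int_mul {n : ℕ} (hn : n ≠ 0) (m : ℤ) :
    ∑ k ∈ range n, exp ((2 * π * m * k / n : ℝ) * I) =
      if (n : ℤ) ∣ m then (n : ℂ) else 0 := by
  have hζ := isPrimitiveRoot_exp n hn
  have hterm (k : ℕ) : exp ((2 * π * m * k / n : ℝ) * I) = (exp (2 * π * I / n) ^ m) ^ k := by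
    rw [← exp_int_mul, ← Complex.exp_nat_mul]
    push_cast
    ring_nf
  have hpow : (exp (2 * π * I / n) ^ m) ^ n = 1 := by
    rw [← zpow_natCast, ← _root_.zpow_mul, mul_comm m, _root_.zpow_mul, zpow_natCast,
      hζ.pow_eq_one, _root_.one_zpow]
  simp only [hterm, geom_sum_range_of_pow_eq_one hpow, hζ.zpow_eq_one_iff_dvd]

theorem sum_range_cos_two_pi_int_mul {n : ℕ} (hn : n ≠ 0) (m : ℤ) :
    ∑ k ∈ range n, cos (2 * π * m * k / n) = if (n : ℤ) ∣ m then (n : ℝ) else 0 := by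
  have h := congrArg Complex.re (sum_range_exp_two_pi_int_mul hn m)
  simp only [Complex.re_sum, Complex.exp_ofReal_mul_I_re, apply_ite Complex.re,
    Complex.natCast_re, Complex.zero_re] at h
  exact h

theorem sum_range_sin_two_pi_int_mul {n : ℕ} (hn : n ≠ 0) (m : ℤ) :
    ∑ k ∈ range n, sin (2 * π * m * k / n) = 0 := by
  have h := congrArg Complex.im (sum_range_exp_two_pi_int_mul hn m)
  simp only [Complex.im_sum, Complex.exp_ofReal_mul_I_im, apply_ite Complex.im,
    Complex.natCast_im, Complex.zero_im, ite_self] at h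
  exact h

theorem Fin.natCast_dvd_val_sub_val_iff {n : ℕ} {i j : Fin n} :
    (n : ℤ) ∣ (i : ℤ) - j ↔ i = j := by
  refine ⟨fun h => Fin.ext ((Nat.modEq_iff_dvd.2 h).eq_of_lt_of_lt j.2 i.2).symm, ?_⟩
  rintro rfl
  simp

theorem cos_add_sin_mul_cos_add_sin (x y : ℝ) :
    (cos x + sin x) * (cos y + sin y) = cos (x - y) + sin (x + y) := by
  rw [cos_sub, sin_add]
  ring

theorem Matrix.mul_eq_smul_one_comm {ι K : Type*} [Fintype ι] [DecidableEq ι] [Field K]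
    {A B : Matrix ι ι K} {c : K} (hc : c ≠ 0) (h : A * B = c • 1) : B * A = c • 1 := by
  have hinv : B * (c⁻¹ • A) = 1 :=
    mul_eq_one_comm.1 (by rw [smul_mul_assoc, h, smul_smul, inv_mul_cancel₀ hc, one_smul])
  rw [mul_smul_comm] at hinv
  rw [← hinv, smul_smul, mul_inv_cancel₀ hc, one_smul]

theorem hartley_mul_transpose (n : ℕ) : hartley n * (hartley n)ᵀ = (n : ℝ) • 1 := by
  ext j j'
  have hn : n ≠ 0 := (Fin.pos j).ne'
  have hterm (k : Fin n) : hartley n j k * hartley n j' k =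
      cos (2 * π * ((j - j' : ℤ) : ℝ) * k / n) +
        sin (2 * π * ((j + j' + 1 : ℤ) : ℝ) * k / n) := by
    rw [hartley, hartley, cos_add_sin_mul_cos_add_sin]
    push_cast
    ring_nf
  simp only [mul_apply, transpose_apply, hterm, sum_add_distrib]
  rw [Fin.sum_univ_eq_sum_range (fun k => cos (2 * π * ((j - j' : ℤ) : ℝ) * k / n)),
    Fin.sum_univ_eq_sum_range (fun k => sin (2 * π * ((j + j' + 1 : ℤ) : ℝ) * k / n)),
    sum_range_cos_two_pi_int_mul hn, sum_range_sin_two_pi_int_mul hn, add_zero]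
  simp [Fin.natCast_dvd_val_sub_val_iff, one_apply]

theorem hartley_orthogonal_general (n : ℕ) :
    hartley n * (hartley n)ᵀ = (n : ℝ) • (1 : Matrix (Fin n) (Fin n) ℝ) ∧
    (hartley n)ᵀ * hartley n = (n : ℝ) • (1 : Matrix (Fin n) (Fin n) ℝ) := by
  obtain rfl | hn := eq_or_ne n 0
  · exact ⟨Subsingleton.elim _ _, Subsingleton.elim _ _⟩
  exact ⟨hartley_mul_transpose n,
    Matrix.mul_eq_smul_one_comm (Nat.cast_ne_zero.2 hn) (hartley_mul_transpose n)⟩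

/-- The cell-centered Hartley matrix is orthogonal up to the factor `n`:
`H(n)·H(n)ᵀ = H(n)ᵀ·H(n) = n·I_n`. -/
theorem hartley_orthogonal (n : ℕ) (hn : 1 ≤ n) :
    hartley n * (hartley n)ᵀ = (n : ℝ) • (1 : Matrix (Fin n) (Fin n) ℝ) ∧
    (hartley n)ᵀ * hartley n = (n : ℝ) • (1 : Matrix (Fin n) (Fin n) ℝ) :=
  hartley_orthogonal_general n
end

section
/- For every k = 0,…,n_0−1, the prolongation of the coarse-grid Hartley basis vector satisfies P·h⁰_k = c_k·h¹_k − c_{n_0+k}·h¹_{n_0+k}. -/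
open Matrix Real

/-- The prolongation matrix `P ∈ ℝ^{2n₀ × n₀}` with `P_{2j,k} = P_{2j+1,k} = δ_{j,k}`. -/
def prolong (n₀ : ℕ) : Matrix (Fin (2 * n₀)) (Fin n₀) ℝ :=
  fun j k => if j.val / 2 = k.val then 1 else 0

/-- The damping coefficient `c_k = cos(kπ/(2n₀))`. -/
noncomputable def cc (n₀ k : ℕ) : ℝ := Real.cos (k * Real.pi / (2 * n₀))

lemma key_even (a x : ℝ) (m : ℕ) :
    Real.cos (x + a) + Real.sin (x + a) =
      Real.cos a * (Real.cos x + Real.sin x) -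
        Real.cos (a + π/2) *
          (Real.cos ((x + π/2) + (m : ℤ) * (2*π)) + Real.sin ((x + π/2) + (m : ℤ) * (2*π))) := by
  rw [Real.cos_add_int_mul_two_pi, Real.sin_add_int_mul_two_pi, Real.cos_add_pi_div_two,
    Real.sin_add_pi_div_two, Real.cos_add_pi_div_two, Real.cos_add, Real.sin_add]
  ring

lemma key_odd (a x : ℝ) (m : ℕ) :
    Real.cos (x - a) + Real.sin (x - a) =
      Real.cos a * (Real.cos x + Real.sin x) -
        Real.cos (a + π/2) *
          (Real.cos (((x + π) + π/2) + (m : ℤ) * (2*π)) +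
            Real.sin (((x + π) + π/2) + (m : ℤ) * (2*π))) := by
  rw [Real.cos_add_int_mul_two_pi, Real.sin_add_int_mul_two_pi, Real.cos_add_pi_div_two,
    Real.sin_add_pi_div_two, Real.cos_add_pi_div_two, Real.cos_add_pi, Real.sin_add_pi,
    Real.cos_sub, Real.sin_sub]
  ring

/-- Prolongation of coarse-grid Hartley basis vectors:
`P·h⁰_k = c_k·h¹_k − c_{n₀+k}·h¹_{n₀+k}` for `k = 0,…,n₀−1`. -/
theorem prolong_hartley (n₀ : ℕ) (hn : 1 ≤ n₀) (k : Fin n₀) :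
    (prolong n₀).mulVec (fun j => hartley n₀ j k) =
      cc n₀ k.val •
          (fun j => hartley (2 * n₀) j ⟨k.val, by have := k.isLt; omega⟩) -
        cc n₀ (n₀ + k.val) •
          (fun j => hartley (2 * n₀) j ⟨n₀ + k.val, by have := k.isLt; omega⟩) := by
  have hN : (n₀ : ℝ) ≠ 0 := Nat.cast_ne_zero.mpr (by omega)
  funext j
  have hj2 : j.val / 2 < n₀ := Nat.div_lt_of_lt_mul (by have := j.isLt; omega)
  have hsum : (prolong n₀).mulVec (fun j' => hartley n₀ j' k) j = hartley n₀ ⟨j.val / 2, hj2⟩ k := by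
    simp only [mulVec, dotProduct, prolong]
    rw [Finset.sum_eq_single (⟨j.val / 2, hj2⟩ : Fin n₀)]
    · simp
    · intro b _ hb
      rw [if_neg, zero_mul]
      intro h
      exact hb (Fin.ext h.symm)
    · simp
  rw [hsum]
  simp only [Pi.sub_apply, Pi.smul_apply, smul_eq_mul, hartley, cc]
  set a : ℝ := (k.val : ℝ) * π / (2 * n₀) with ha
  rcases Nat.even_or_odd j.val with ⟨m, hm⟩ | ⟨m, hm⟩
  · have hjm : j.val = 2 * m := by omega
    have hd : j.val / 2 = m := by omega
    have e0 : 2 * (((j.val / 2 : ℕ) : ℝ) + 1/2) * (k.val : ℝ) * π / n₀ =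
        (4 * m + 1) * a + a := by
      rw [hd, ha]; field_simp; ring
    have e1 : 2 * ((j.val : ℝ) + 1/2) * (k.val : ℝ) * π / (2 * n₀ : ℕ) =
        (4 * m + 1) * a := by
      rw [ha]; push_cast [hjm]; field_simp; ring
    have e2 : 2 * ((j.val : ℝ) + 1/2) * ((n₀ + k.val : ℕ) : ℝ) * π / (2 * n₀ : ℕ) =
        ((4 * m + 1) * a + π/2) + (m : ℤ) * (2*π) := by
      rw [ha]; push_cast [hjm]; field_simp; ring
    have e3 : ((n₀ + k.val : ℕ) : ℝ) * π / (2 * n₀) = a + π/2 := by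
      rw [ha]; push_cast; field_simp; ring
    rw [e0, e1, e2, e3]
    exact key_even a ((4 * m + 1) * a) m
  · have hd : j.val / 2 = m := by omega
    have e0 : 2 * (((j.val / 2 : ℕ) : ℝ) + 1/2) * (k.val : ℝ) * π / n₀ =
        (4 * m + 3) * a - a := by
      rw [hd, ha]; field_simp; ring
    have e1 : 2 * ((j.val : ℝ) + 1/2) * (k.val : ℝ) * π / (2 * n₀ : ℕ) =
        (4 * m + 3) * a := by
      rw [ha]; push_cast [hm]; field_simp; ring
    have e2 : 2 * ((j.val : ℝ) + 1/2) * ((n₀ + k.val : ℕ) : ℝ) * π / (2 * n₀ : ℕ) =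
        ((((4 * m + 3) * a) + π) + π/2) + (m : ℤ) * (2*π) := by
      rw [ha]; push_cast [hm]; field_simp; ring
    have e3 : ((n₀ + k.val : ℕ) : ℝ) * π / (2 * n₀) = a + π/2 := by
      rw [ha]; push_cast; field_simp; ring
    rw [e0, e1, e2, e3]
    exact key_odd a ((4 * m + 3) * a) m
end

section
/- The cell-centered Hartley matrix is related to the node-centered Hartley matrices by the shift identity H(n) = √n·(Ȟ⁺·C + Ȟ⁻·S), where C = Diag(cos(kπ/n), k = 0,…,n−1) and S = Diag(sin(kπ/n), k = 0,…,n−1). -/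
open Matrix Real

/-- The node-centered cosine matrix `(Ȟ_c)_{j,k} = n^{−1/2}·cos(2jkπ/n)`. -/
noncomputable def Hc (n : ℕ) : Matrix (Fin n) (Fin n) ℝ :=
  fun j k => Real.cos (2 * (j.val : ℝ) * (k.val : ℝ) * Real.pi / n) / Real.sqrt n

/-- The node-centered sine matrix `(Ȟ_s)_{j,k} = n^{−1/2}·sin(2jkπ/n)`. -/
noncomputable def Hs (n : ℕ) : Matrix (Fin n) (Fin n) ℝ :=
  fun j k => Real.sin (2 * (j.val : ℝ) * (k.val : ℝ) * Real.pi / n) / Real.sqrt n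

/-- The node-centered Hartley matrix `Ȟ⁺ = Ȟ_c + Ȟ_s`. -/
noncomputable def Hp (n : ℕ) : Matrix (Fin n) (Fin n) ℝ := Hc n + Hs n

/-- The node-centered Hartley matrix `Ȟ⁻ = Ȟ_c − Ȟ_s`. -/
noncomputable def Hm (n : ℕ) : Matrix (Fin n) (Fin n) ℝ := Hc n - Hs n

/-- Shifting the row index by half a cell splits each angle as `2jkπ/n + kπ/n`; this identity
regroups `cos + sin` of that sum into the node-centered `cos ± sin`. -/
lemma cos_add_add_sin_add (x y : ℝ) :
    cos (x + y) + sin (x + y) = (cos x + sin x) * cos y + (cos x - sin x) * sin y := by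
  rw [cos_add, sin_add]
  ring

theorem hartley_shift_general (n : ℕ) :
    hartley n =
      Real.sqrt n •
        (Hp n * Matrix.diagonal (fun k : Fin n => Real.cos ((k.val : ℝ) * Real.pi / n)) +
         Hm n * Matrix.diagonal (fun k : Fin n => Real.sin ((k.val : ℝ) * Real.pi / n))) := by
  ext j k
  have hsqrt : sqrt n ≠ 0 := sqrt_ne_zero'.mpr (by exact_mod_cast j.pos)
  have hangle : 2 * ((j : ℝ) + 1 / 2) * k * π / n = 2 * j * k * π / n + k * π / n := by ring
  simp only [hartley, Hp, Hm, Hc, Hs, Matrix.smul_apply, Matrix.add_apply, Matrix.sub_apply,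
    mul_diagonal, smul_eq_mul]
  rw [hangle, cos_add_add_sin_add]
  field_simp

/-- The shift identity `H(n) = √n·(Ȟ⁺·C + Ȟ⁻·S)` with
`C = Diag(cos(kπ/n))` and `S = Diag(sin(kπ/n))`. -/
theorem hartley_shift (n : ℕ) (hn : 1 ≤ n) :
    hartley n =
      Real.sqrt n •
        (Hp n * Matrix.diagonal (fun k : Fin n => Real.cos ((k.val : ℝ) * Real.pi / n)) +
         Hm n * Matrix.diagonal (fun k : Fin n => Real.sin ((k.val : ℝ) * Real.pi / n))) :=
  hartley_shift_general n
end

section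
/- If A ∈ ℝ^{n×n} is a symmetric circulant matrix with first column a, then the cell-centered Hartley matrix diagonalizes A: H(n)ᵀ·A·H(n) = n·Λ, where Λ = √n·Diag(Ȟ_c·a). -/
open Matrix Real

/-!
The columns of `H(n)` sample the `n`-periodic waves `t ↦ cas ((2t + 1)kπ/n)`, where
`cas = cos + sin`. Because `cas (x - y) + cas (x + y) = 2 cos y · cas x` and `a` is symmetric,
each column is an eigenvector of the circulant matrix with eigenvalue
`∑ₘ aₘ cos (2kmπ/n) = √n (Ȟ_c a)_k`. The columns are orthogonal of squared norm `n`, since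
`cas x · cas y = cos (x - y) + sin (x + y)` and the sums of `cos` and `sin` over the odd
multiples `(2j + 1)mπ/n` telescope once multiplied by `sin (mπ/n)`.
-/

open Finset Function

noncomputable def cas (x : ℝ) : ℝ := cos x + sin x

theorem cas_add_int_mul_two_pi (x : ℝ) (m : ℤ) : cas (x + m * (2 * π)) = cas x := by
  rw [cas, cos_add_int_mul_two_pi, sin_add_int_mul_two_pi, cas]

theorem cas_sub_add_cas (x y : ℝ) : cas (x - y) + cas (x + y) = 2 * cos y * cas x := by
  simp only [cas, cos_sub, cos_add, sin_sub, sin_add]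
  ring

theorem cas_mul_cas (x y : ℝ) : cas x * cas y = cos (x - y) + sin (x + y) := by
  simp only [cas, cos_sub, sin_add]
  ring

theorem two_mul_sin_mul_sum_cos_odd_mul (θ : ℝ) (n : ℕ) :
    2 * sin θ * ∑ j ∈ range n, cos ((2 * j + 1) * θ) = sin (2 * n * θ) := by
  rw [mul_sum]
  convert sum_range_sub (fun j : ℕ => sin (2 * j * θ)) n using 2 with j
  · rw [two_mul_sin_mul_cos, ← neg_sub, sin_neg]
    push_cast
    ring_nf
  · simp

theorem two_mul_sin_mul_sum_sin_odd_mul (θ : ℝ) (n : ℕ) :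
    2 * sin θ * ∑ j ∈ range n, sin ((2 * j + 1) * θ) = 1 - cos (2 * n * θ) := by
  rw [mul_sum]
  convert sum_range_sub' (fun j : ℕ => cos (2 * j * θ)) n using 2 with j
  · rw [two_mul_sin_mul_sin, ← cos_neg (θ - _)]
    push_cast
    ring_nf
  · simp

theorem two_mul_natCast_mul_intCast_mul_pi_div {n : ℕ} (hn : n ≠ 0) (m : ℤ) :
    2 * n * (m * π / n) = m * (2 * π) := by
  field_simp

theorem sum_cos_odd_mul_int_mul_pi_div {n : ℕ} {m : ℤ} (hm : ¬ (n : ℤ) ∣ m) :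
    ∑ j ∈ range n, cos ((2 * j + 1) * (m * π / n)) = 0 := by
  rcases eq_or_ne n 0 with rfl | hn
  · simp
  have hsin : sin (m * π / n) ≠ 0 := by
    rw [Ne, sin_eq_zero_iff]
    rintro ⟨q, hq⟩
    refine hm ⟨q, ?_⟩
    have : (m : ℝ) = n * q := by field_simp at hq; linarith
    exact_mod_cast this
  have key := two_mul_sin_mul_sum_cos_odd_mul (m * π / n) n
  have hsin_two_pi : sin (m * (2 * π)) = 0 := sin_eq_zero_iff.mpr ⟨2 * m, by push_cast; ring⟩
  rw [two_mul_natCast_mul_intCast_mul_pi_div hn, hsin_two_pi] at key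
  simpa [hsin] using key

theorem sum_sin_odd_mul_int_mul_pi_div (n : ℕ) (m : ℤ) :
    ∑ j ∈ range n, sin ((2 * j + 1) * (m * π / n)) = 0 := by
  by_cases hsin : sin (m * π / n) = 0
  · obtain ⟨q, hq⟩ := sin_eq_zero_iff.mp hsin
    refine sum_eq_zero fun j _ => ?_
    rw [← hq, ← mul_assoc]
    exact_mod_cast sin_int_mul_pi ((2 * j + 1) * q)
  · have hn : n ≠ 0 := by rintro rfl; simp at hsin
    have key := two_mul_sin_mul_sum_sin_odd_mul (m * π / n) n
    rw [two_mul_natCast_mul_intCast_mul_pi_div hn, cos_int_mul_two_pi, sub_self] at key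
    simpa [hsin] using key

theorem Function.Periodic.fin_val_sub {α : Type*} {f : ℤ → α} {n : ℕ} (hf : Periodic f n)
    (a b : Fin n) : f ((a - b : Fin n) : ℕ) = f (a - b) := by
  rw [Fin.intCast_val_sub_eq_sub_add_ite]
  split_ifs
  · rw [Nat.cast_zero, add_zero]
  · exact hf _

theorem Function.Periodic.fin_val_add {α : Type*} {f : ℤ → α} {n : ℕ} (hf : Periodic f n)
    (a b : Fin n) : f ((a + b : Fin n) : ℕ) = f (a + b) := by
  rw [Fin.val_add_eq_ite]
  split_ifs with h
  · push_cast [Nat.cast_sub h]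
    exact hf.sub_eq _
  · rfl

noncomputable def hartleyColumn (n k : ℕ) (t : ℤ) : ℝ := cas ((2 * t + 1) * (k * π / n))

theorem hartley_apply (n : ℕ) (j k : Fin n) : hartley n j k = hartleyColumn n k j := by
  rw [hartley, hartleyColumn, cas]
  push_cast
  ring_nf

theorem hartleyColumn_periodic (n k : ℕ) : Periodic (hartleyColumn n k) n := by
  intro t
  rcases eq_or_ne n 0 with rfl | hn
  · simp
  have harg : (2 * ((t + n : ℤ) : ℝ) + 1) * (k * π / n)
      = (2 * t + 1) * (k * π / n) + (k : ℤ) * (2 * π) := by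
    push_cast
    field_simp
    ring
  rw [hartleyColumn, hartleyColumn, harg, cas_add_int_mul_two_pi]

theorem hartleyColumn_sub_add (n k : ℕ) (t m : ℤ) :
    hartleyColumn n k (t - m) + hartleyColumn n k (t + m)
      = 2 * cos (2 * k * m * π / n) * hartleyColumn n k t := by
  simp only [hartleyColumn]
  convert cas_sub_add_cas ((2 * t + 1) * (k * π / n)) (2 * k * m * π / n) using 3 <;>
    · push_cast
      ring

theorem transpose_hartley_mul_hartley (n : ℕ) : (hartley n)ᵀ * hartley n = (n : ℝ) • 1 := by
  ext k l
  have hterm : ∀ j : ℕ, cas ((2 * j + 1) * (k * π / n)) * cas ((2 * j + 1) * (l * π / n))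
      = cos ((2 * j + 1) * (((k - l : ℤ) : ℝ) * π / n))
        + sin ((2 * j + 1) * (((k + l : ℤ) : ℝ) * π / n)) := by
    intro j
    rw [cas_mul_cas]
    push_cast
    ring_nf
  simp only [mul_apply, transpose_apply, hartley_apply, hartleyColumn, Matrix.smul_apply,
    Matrix.one_apply, Int.cast_natCast, hterm, smul_eq_mul]
  rw [Fin.sum_univ_eq_sum_range (fun j => cos ((2 * j + 1) * (((k - l : ℤ) : ℝ) * π / n))
      + sin ((2 * j + 1) * (((k + l : ℤ) : ℝ) * π / n))), sum_add_distrib,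
    sum_sin_odd_mul_int_mul_pi_div, add_zero]
  split_ifs with hkl
  · simp [hkl]
  · rw [mul_zero]
    refine sum_cos_odd_mul_int_mul_pi_div fun hdvd => hkl (Fin.ext ?_)
    have := Int.eq_zero_of_abs_lt_dvd hdvd (abs_sub_lt_iff.mpr ⟨by omega, by omega⟩)
    omega

noncomputable def cosTransform {n : ℕ} (a : Fin n → ℝ) (k : Fin n) : ℝ :=
  ∑ m, cos (2 * k.val * m.val * π / n) * a m

theorem circulant_mul_hartley {n : ℕ} [NeZero n] {a : Fin n → ℝ} (ha : ∀ i, a (-i) = a i) :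
    circulant a * hartley n = hartley n * diagonal (cosTransform a) := by
  ext j k
  have hper := hartleyColumn_periodic n k
  have hsub : ∑ m, a (j - m) * hartley n m k = ∑ m, a m * hartley n (j - m) k :=
    Fintype.sum_equiv (Equiv.subLeft j) _ _ fun m => by simp
  have hadd : ∑ m, a m * hartley n (j - m) k = ∑ m, a m * hartley n (j + m) k :=
    Fintype.sum_equiv (Equiv.neg (Fin n)) _ _ fun m => by simp [ha, sub_eq_add_neg]
  have hpair : ∀ m, hartley n (j - m) k + hartley n (j + m) k
      = 2 * cos (2 * k.val * m.val * π / n) * hartley n j k := fun m => by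
    rw [hartley_apply, hartley_apply, hartley_apply, hper.fin_val_sub, hper.fin_val_add]
    exact_mod_cast hartleyColumn_sub_add n k j m
  rw [mul_diagonal, mul_apply, cosTransform]
  simp only [circulant_apply]
  have htwice : 2 * ∑ m, a (j - m) * hartley n m k
      = 2 * (hartley n j k * ∑ m, cos (2 * k.val * m.val * π / n) * a m) := by
    rw [two_mul]
    nth_rewrite 1 [hsub, hadd]
    rw [hsub, ← sum_add_distrib, mul_sum, mul_sum]
    refine sum_congr rfl fun m _ => ?_
    rw [← mul_add, add_comm, hpair]
    ring
  exact mul_left_cancel₀ two_ne_zero htwice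

theorem sqrt_smul_Hc_mulVec {n : ℕ} (a : Fin n → ℝ) :
    √n • (Hc n *ᵥ a) = cosTransform a := by
  ext k
  have hn : (0 : ℝ) < √n := Real.sqrt_pos.mpr (by exact_mod_cast k.pos)
  simp only [Pi.smul_apply, mulVec, dotProduct, Hc, cosTransform, smul_eq_mul, mul_sum]
  refine sum_congr rfl fun m _ => ?_
  field_simp

/-- For a symmetric circulant `A` with first column `a`, the cell-centered
Hartley matrix diagonalizes `A`: `H(n)ᵀ·A·H(n) = n·Λ` with `Λ = √n·Diag(Ȟ_c·a)`. -/
theorem symm_circulant_diag_cell_hartley (n : ℕ) [NeZero n] (a : Fin n → ℝ)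
    (A : Matrix (Fin n) (Fin n) ℝ)
    (hA : ∀ j k : Fin n, A j k = a (j - k))
    (ha : ∀ i : Fin n, a (-i) = a i) :
    (hartley n)ᵀ * A * hartley n =
      (n : ℝ) • (Real.sqrt n • Matrix.diagonal ((Hc n).mulVec a)) := by
  obtain rfl : A = circulant a := Matrix.ext hA
  rw [Matrix.mul_assoc, circulant_mul_hartley ha, ← Matrix.mul_assoc,
    transpose_hartley_mul_hartley, ← diagonal_smul, sqrt_smul_Hc_mulVec, smul_mul, Matrix.one_mul]
end

section
/- Let n_1 > n_0 > 0, let A_1 ∈ ℝ^{n_1×n_1}, and let P ∈ ℝ^{n_1×n_0} satisfy Pᵀ·P = (n_1/n_0)·I_{n_0}, with R = Pᵀ. Then the Galerkin operator A_0* = (n_0/n_1)²·R·A_1·P minimizes the Frobenius norm ‖A_1 − P·A_0·R‖_F over all A_0 ∈ ℝ^{n_0×n_0}; that is, for every A_0 ∈ ℝ^{n_0×n_0}, ‖A_1 − P·A_0*·R‖_F ≤ ‖A_1 − P·A_0·R‖_F. -/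
open Matrix

/-- The Frobenius norm of a real matrix, `‖M‖_F = (tr(Mᵀ·M))^{1/2}`. -/
noncomputable def frobNorm {m n : ℕ} (M : Matrix (Fin m) (Fin n) ℝ) : ℝ :=
  Real.sqrt (Matrix.trace (Mᵀ * M))

/-!
With `c = n₁/n₀` and `X ↦ P X Pᵀ`, the hypothesis `Pᵀ P = c • 1` makes this map scale the
Frobenius inner product `⟪X, Y⟫ = tr (Xᵀ Y)` by `c²`, and `A₀* = c⁻² Pᵀ A₁ P` is its adjoint
applied to `A₁`, rescaled. Hence `A₁ - P A₀* Pᵀ` is orthogonal to the range of the map, and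
Pythagoras gives `‖A₁ - P A₀ Pᵀ‖² = ‖A₁ - P A₀* Pᵀ‖² + c² ‖A₀* - A₀‖²`.
-/

namespace Matrix

variable {m n R : Type*}

theorem transpose_mul_mul_transpose [Fintype n] [CommRing R] (P : Matrix m n R)
    (X : Matrix n n R) : (P * X * Pᵀ)ᵀ = P * Xᵀ * Pᵀ := by
  rw [transpose_mul, transpose_mul, transpose_transpose, Matrix.mul_assoc]

variable [Fintype m] [Fintype n]

theorem trace_transpose_mul_self_nonneg [Ring R] [LinearOrder R] [IsOrderedRing R]
    (M : Matrix m n R) : 0 ≤ trace (Mᵀ * M) :=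
  Finset.sum_nonneg fun _ _ => Finset.sum_nonneg fun _ _ => mul_self_nonneg _

section CommRing

variable [CommRing R]

theorem trace_add_transpose_mul_self_of_trace_transpose_mul_eq_zero {B C : Matrix m n R}
    (hBC : trace (Bᵀ * C) = 0) :
    trace ((B + C)ᵀ * (B + C)) = trace (Bᵀ * B) + trace (Cᵀ * C) := by
  have hCB : trace (Cᵀ * B) = 0 := by
    rw [← trace_transpose, transpose_mul, transpose_transpose, hBC]
  rw [transpose_add, Matrix.add_mul, Matrix.mul_add, Matrix.mul_add, trace_add, trace_add,
    trace_add, hBC, hCB, add_zero, zero_add]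

theorem trace_transpose_mul_conj (A : Matrix m m R) (P : Matrix m n R) (X : Matrix n n R) :
    trace (Aᵀ * (P * X * Pᵀ)) = trace ((Pᵀ * A * P)ᵀ * X) := by
  rw [← Matrix.mul_assoc, trace_mul_cycle]
  simp only [transpose_mul, transpose_transpose, Matrix.mul_assoc]

variable [DecidableEq n] {P : Matrix m n R} {c : R}

theorem trace_conj_mul_conj (hP : Pᵀ * P = c • 1) (X Y : Matrix n n R) :
    trace (P * X * Pᵀ * (P * Y * Pᵀ)) = c ^ 2 * trace (X * Y) :=
  calc trace (P * X * Pᵀ * (P * Y * Pᵀ))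
      = trace (P * (X * (Pᵀ * P) * Y * Pᵀ)) := by simp only [Matrix.mul_assoc]
    _ = trace (Pᵀ * P * (X * (Pᵀ * P) * Y)) := by
        rw [trace_mul_comm, Matrix.mul_assoc, trace_mul_comm, Matrix.mul_assoc]
    _ = c ^ 2 * trace (X * Y) := by
        simp only [hP, Matrix.mul_smul, Matrix.smul_mul, Matrix.mul_one, Matrix.one_mul, smul_smul,
          trace_smul, smul_eq_mul, sq]

end CommRing

section Field

variable [Field R] [DecidableEq n] {P : Matrix m n R} {c : R}

theorem trace_transpose_mul_conj_eq_zero_of_galerkin (hP : Pᵀ * P = c • 1) (hc : c ≠ 0)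
    (A : Matrix m m R) (X : Matrix n n R) :
    trace ((A - P * ((c⁻¹) ^ 2 • (Pᵀ * A * P)) * Pᵀ)ᵀ * (P * X * Pᵀ)) = 0 := by
  rw [transpose_sub, Matrix.sub_mul, trace_sub, transpose_mul_mul_transpose,
    trace_conj_mul_conj hP, trace_transpose_mul_conj, transpose_smul, Matrix.smul_mul, trace_smul,
    smul_eq_mul, ← mul_assoc, ← mul_pow, mul_inv_cancel₀ hc, one_pow, one_mul, sub_self]

theorem trace_galerkin_pythagoras (hP : Pᵀ * P = c • 1) (hc : c ≠ 0)
    (A : Matrix m m R) (X : Matrix n n R) :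
    let A' := (c⁻¹) ^ 2 • (Pᵀ * A * P)
    trace ((A - P * X * Pᵀ)ᵀ * (A - P * X * Pᵀ)) =
      trace ((A - P * A' * Pᵀ)ᵀ * (A - P * A' * Pᵀ)) + c ^ 2 * trace ((A' - X)ᵀ * (A' - X)) := by
  intro A'
  have hsplit : A - P * X * Pᵀ = (A - P * A' * Pᵀ) + P * (A' - X) * Pᵀ := by
    rw [Matrix.mul_sub, Matrix.sub_mul]; abel
  rw [hsplit, trace_add_transpose_mul_self_of_trace_transpose_mul_eq_zero
    (trace_transpose_mul_conj_eq_zero_of_galerkin hP hc A _), transpose_mul_mul_transpose,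
    trace_conj_mul_conj hP]

end Field

end Matrix

/-- The Galerkin operator `A₀* = (n₀/n₁)²·R·A₁·P` (with `R = Pᵀ`) minimizes the
Frobenius norm `‖A₁ − P·A₀·R‖_F` over all `A₀ ∈ ℝ^{n₀×n₀}`, provided
`Pᵀ·P = (n₁/n₀)·I_{n₀}`. -/
theorem galerkin_optimal (n₀ n₁ : ℕ) (h₀ : 0 < n₀) (h₁ : n₀ < n₁)
    (A₁ : Matrix (Fin n₁) (Fin n₁) ℝ) (P : Matrix (Fin n₁) (Fin n₀) ℝ)
    (hP : Pᵀ * P = ((n₁ : ℝ) / (n₀ : ℝ)) • (1 : Matrix (Fin n₀) (Fin n₀) ℝ))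
    (A₀ : Matrix (Fin n₀) (Fin n₀) ℝ) :
    frobNorm (A₁ - P * (((n₀ : ℝ) / (n₁ : ℝ)) ^ 2 • (Pᵀ * A₁ * P)) * Pᵀ) ≤
      frobNorm (A₁ - P * A₀ * Pᵀ) := by
  have hc : (n₁ : ℝ) / n₀ ≠ 0 := by
    have : 0 < n₁ := h₀.trans h₁
    positivity
  rw [← inv_div]
  unfold frobNorm
  refine Real.sqrt_le_sqrt ?_
  rw [trace_galerkin_pythagoras hP hc A₁ A₀]
  exact le_add_of_nonneg_right
    (mul_nonneg (sq_nonneg _) (trace_transpose_mul_self_nonneg _))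
end
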